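/- Fix n ≥ 2 and complex numbers q_{ij} (1 ≤ i, j ≤ n) with q_{ii} = 1, q_{ji} = q_{ij}^{-1} and |q_{ij}| = 1. On the m-particle space ℓ²({1, …, n}^m) (the Hilbert space of complex functions on words of length m, with orthonormal basis {e_x}), define for each permutation σ ∈ S_m the linear operator U^{m,q}_σ by U^{m,q}_σ e_x = q^σ(x) e_{x ∘ σ^{-1}}. Then each U^{m,q}_σ is unitary with (U^{m,q}_σ)^* = U^{m,q}_{σ^{-1}}, and the map σ ↦ U^{m,q}_σ is a group homomorphism: U^{m,q}_{σ_1 σ_2} = U^{m,q}_{σ_1} U^{m,q}_{σ_2} for all σ_1, σ_2 ∈ S_m. -/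

import Mathlib

/-!
In terms of the word `x`, `q^σ(x)` is the product of `q_{x_a x_b}` over the inversions `a < b`,
`σ b < σ a` of `σ`. More generally, for injective maps `f, g` of a finite set into a linear
order, take the product of `φ a b` over the pairs ordered by `f` and reversed by `g`. When
`φ a b φ b a = 1` this product is multiplicative along a chain `f, g, h`: a pair reversed by `g`
and reversed back by `h` contributes `φ a b φ b a = 1`. For the chain `id, τ, στ` this is the
cocycle identity `q^{στ}(x ∘ τ) = q^σ(x) q^τ(x ∘ τ)`, i.e. `U_{στ} = U_σ U_τ`. With `τ = σ⁻¹`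
and `|q^σ(x)| = 1` it gives `conj q^{σ⁻¹}(x ∘ σ⁻¹) = q^σ(x)`, i.e. `U_σ^* = U_{σ⁻¹}`, and
unitarity follows.
-/

open scoped BigOperators

/-- `q^σ(x) = ∏ q_{x_{σ⁻¹(k)} x_{σ⁻¹(i)}}`, the product over all pairs `i < k`
with `σ⁻¹(i) > σ⁻¹(k)`. -/
noncomputable def qSigma {n : ℕ} (q : Fin n → Fin n → ℂ) {m : ℕ} (x : Fin m → Fin n)
    (σ : Equiv.Perm (Fin m)) : ℂ :=
  ∏ p ∈ Finset.univ.filter (fun p : Fin m × Fin m => p.1 < p.2 ∧ σ⁻¹ p.2 < σ⁻¹ p.1),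
    q (x (σ⁻¹ p.2)) (x (σ⁻¹ p.1))

/-- The operator `U^{m,q}_σ` on `ℓ²({1,…,n}^m)` with `U^{m,q}_σ e_x = q^σ(x) e_{x ∘ σ⁻¹}`. -/
noncomputable def Uop {n : ℕ} (q : Fin n → Fin n → ℂ) (m : ℕ) (σ : Equiv.Perm (Fin m)) :
    EuclideanSpace ℂ (Fin m → Fin n) →L[ℂ] EuclideanSpace ℂ (Fin m → Fin n) :=
  LinearMap.toContinuousLinearMap
    { toFun := fun f => (WithLp.toLp 2 (fun (y : Fin m → Fin n) =>
          qSigma q (fun i => y (σ i)) σ * f (fun i => y (σ i))) :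
        EuclideanSpace ℂ (Fin m → Fin n))
      map_add' := by
        intro f g
        ext y
        simp [PiLp.add_apply, mul_add]
      map_smul' := by
        intro c f
        ext y
        simp [PiLp.smul_apply, smul_eq_mul]
        ring }

open Finset Function

section InversionProd

variable {α β γ M : Type*} [Fintype α] [LinearOrder β] [CommMonoid M]

def inversionProd (φ : α → α → M) (f g : α → β) : M :=
  ∏ p : α × α with f p.1 < f p.2 ∧ g p.2 < g p.1, φ p.1 p.2

theorem prod_eq_prod_lt_mul_swap {f : α → β} (hf : Injective f) (F : α × α → M)
    (hF : ∀ a, F (a, a) = 1) :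
    ∏ p, F p = ∏ p : α × α with f p.1 < f p.2, F p * F p.swap := by
  rw [prod_mul_distrib, ← prod_filter_mul_prod_filter_not univ (fun p => f p.1 < f p.2)]
  congr 1
  rw [prod_filter, prod_filter, ← (Equiv.prodComm α α).prod_comp]
  refine prod_congr rfl fun ⟨a, b⟩ _ => ?_
  rcases lt_trichotomy (f a) (f b) with h | h | h
  · simp [h, h.not_gt]
  · simp [hf h, hF]
  · simp [h, h.not_gt]

theorem inversionProd_eq_prod_lt {f : α → β} (hf : Injective f) (φ : α → α → M) (g h : α → β) :
    inversionProd φ g h = ∏ p : α × α with f p.1 < f p.2,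
      (if g p.1 < g p.2 ∧ h p.2 < h p.1 then φ p.1 p.2 else 1) *
      (if g p.2 < g p.1 ∧ h p.1 < h p.2 then φ p.2 p.1 else 1) := by
  rw [inversionProd, prod_filter, prod_eq_prod_lt_mul_swap hf]
  · rfl
  · simp

theorem inversionProd_mul_inversionProd {φ : α → α → M} (hφ : ∀ a b, φ a b * φ b a = 1)
    {f g h : α → β} (hf : Injective f) (hg : Injective g) (hh : Injective h) :
    inversionProd φ f g * inversionProd φ g h = inversionProd φ f h := by
  simp only [inversionProd_eq_prod_lt hf, ← prod_mul_distrib]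
  refine prod_congr rfl fun ⟨a, b⟩ hab => ?_
  have hab : f a < f b := (mem_filter.mp hab).2
  have hne : a ≠ b := fun e => hab.ne (congrArg f e)
  rcases (hg.ne hne).lt_or_gt with hg' | hg' <;> rcases (hh.ne hne).lt_or_gt with hh' | hh' <;>
    simp [hab, hab.not_gt, hg', hg'.not_gt, hh', hh'.not_gt, hφ]

theorem inversionProd_comp [Fintype γ] (e : γ ≃ α) (φ : α → α → M) (f g : α → β) :
    inversionProd (fun a b => φ (e a) (e b)) (f ∘ e) (g ∘ e) = inversionProd φ f g :=
  prod_equiv (e.prodCongr e) (by simp) (by simp)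

end InversionProd

theorem qSigma_eq_inversionProd {n m : ℕ} (q : Fin n → Fin n → ℂ) (x : Fin m → Fin n)
    (σ : Equiv.Perm (Fin m)) :
    qSigma q x σ = inversionProd (fun a b => q (x a) (x b)) id σ := by
  refine prod_equiv ((σ⁻¹.prodCongr σ⁻¹).trans (Equiv.prodComm _ _)) ?_ (by simp)
  simp [and_comm]

section qSigma

variable {n m : ℕ} {q : Fin n → Fin n → ℂ}

theorem qSigma_one (x : Fin m → Fin n) : qSigma q x 1 = 1 :=
  prod_eq_one fun p hp => by
    simp only [inv_one, Equiv.Perm.one_apply, mem_filter] at hp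
    exact absurd (hp.2.1.trans hp.2.2) (lt_irrefl _)

theorem qSigma_mul (hq : ∀ i j, q i j * q j i = 1) (x : Fin m → Fin n)
    (σ τ : Equiv.Perm (Fin m)) :
    qSigma q (fun i => x (τ i)) (σ * τ) = qSigma q x σ * qSigma q (fun i => x (τ i)) τ := by
  simp only [qSigma_eq_inversionProd]
  rw [← inversionProd_mul_inversionProd
    (φ := fun a b => q (x (τ a)) (x (τ b))) (fun _ _ => hq _ _) injective_id τ.injective
    (σ * τ).injective, mul_comm]
  congr 1
  exact inversionProd_comp τ (fun a b => q (x a) (x b)) id σ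

theorem norm_qSigma (hq_norm : ∀ i j, ‖q i j‖ = 1) (x : Fin m → Fin n) (σ : Equiv.Perm (Fin m)) :
    ‖qSigma q x σ‖ = 1 := by
  rw [qSigma, norm_prod]
  exact prod_eq_one fun _ _ => hq_norm _ _

theorem conj_qSigma_inv (hq : ∀ i j, q i j * q j i = 1) (hq_norm : ∀ i j, ‖q i j‖ = 1)
    (x : Fin m → Fin n) (σ : Equiv.Perm (Fin m)) :
    starRingEnd ℂ (qSigma q (fun i => x (σ⁻¹ i)) σ⁻¹) = qSigma q x σ := by
  have h := qSigma_mul hq x σ σ⁻¹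
  rw [mul_inv_cancel, qSigma_one] at h
  rw [eq_inv_of_mul_eq_one_right h.symm, Complex.inv_eq_conj (norm_qSigma hq_norm x σ),
    Complex.conj_conj]

end qSigma

section Uop

variable {n : ℕ} {q : Fin n → Fin n → ℂ} {m : ℕ}

theorem Uop_apply (σ : Equiv.Perm (Fin m)) (f : EuclideanSpace ℂ (Fin m → Fin n))
    (y : Fin m → Fin n) :
    Uop q m σ f y = qSigma q (fun i => y (σ i)) σ * f (fun i => y (σ i)) :=
  rfl

theorem Uop_one : Uop q m 1 = 1 := by
  ext f y
  simp [Uop_apply, qSigma_one]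

theorem Uop_mul (hq : ∀ i j, q i j * q j i = 1) (σ τ : Equiv.Perm (Fin m)) :
    Uop q m (σ * τ) = Uop q m σ * Uop q m τ := by
  ext f y
  simp only [mul_apply_eq_comp, Uop_apply, Equiv.Perm.mul_apply]
  rw [qSigma_mul hq (fun i => y (σ i))]
  ring

theorem star_Uop (hq : ∀ i j, q i j * q j i = 1) (hq_norm : ∀ i j, ‖q i j‖ = 1)
    (σ : Equiv.Perm (Fin m)) : star (Uop q m σ) = Uop q m σ⁻¹ := by
  rw [ContinuousLinearMap.star_eq_adjoint, eq_comm, ContinuousLinearMap.eq_adjoint_iff]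
  intro f g
  simp only [PiLp.inner_apply, RCLike.inner_apply', Uop_apply]
  conv_rhs => rw [← (σ.arrowCongr (Equiv.refl (Fin n))).sum_comp]
  refine sum_congr rfl fun x _ => ?_
  have hx : σ.arrowCongr (Equiv.refl (Fin n)) x = fun i => x (σ⁻¹ i) := rfl
  simp only [hx, map_mul, conj_qSigma_inv hq hq_norm]
  simp only [Equiv.Perm.coe_inv, Equiv.symm_apply_apply]
  ring

end Uop

theorem stmt6_general {n : ℕ} (q : Fin n → Fin n → ℂ)
    (hq2 : ∀ i j, q j i = (q i j)⁻¹) (hq3 : ∀ i j, ‖q i j‖ = 1)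
    (m : ℕ) :
    (∀ σ : Equiv.Perm (Fin m),
        star (Uop q m σ) = Uop q m σ⁻¹ ∧
        Uop q m σ ∈ unitary (EuclideanSpace ℂ (Fin m → Fin n) →L[ℂ]
          EuclideanSpace ℂ (Fin m → Fin n))) ∧
    (∀ σ₁ σ₂ : Equiv.Perm (Fin m), Uop q m (σ₁ * σ₂) = Uop q m σ₁ * Uop q m σ₂) := by
  have hq : ∀ i j, q i j * q j i = 1 := fun i j => by
    rw [hq2 i j, mul_inv_cancel₀ (norm_ne_zero_iff.mp (by simp [hq3]))]
  have hstar : ∀ σ, star (Uop q m σ) = Uop q m σ⁻¹ := star_Uop hq hq3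
  refine ⟨fun σ => ⟨hstar σ, ?_⟩, Uop_mul hq⟩
  rw [Unitary.mem_iff, hstar, ← Uop_mul hq, ← Uop_mul hq, inv_mul_cancel, mul_inv_cancel, Uop_one]
  exact ⟨rfl, rfl⟩

/-- Each `U^{m,q}_σ` is unitary with adjoint `U^{m,q}_{σ⁻¹}`, and `σ ↦ U^{m,q}_σ` is a
group homomorphism. -/
theorem stmt6 {n : ℕ} (hn : 2 ≤ n) (q : Fin n → Fin n → ℂ)
    (hq1 : ∀ i, q i i = 1) (hq2 : ∀ i j, q j i = (q i j)⁻¹) (hq3 : ∀ i j, ‖q i j‖ = 1)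
    (m : ℕ) :
    (∀ σ : Equiv.Perm (Fin m),
        star (Uop q m σ) = Uop q m σ⁻¹ ∧
        Uop q m σ ∈ unitary (EuclideanSpace ℂ (Fin m → Fin n) →L[ℂ]
          EuclideanSpace ℂ (Fin m → Fin n))) ∧
    (∀ σ₁ σ₂ : Equiv.Perm (Fin m), Uop q m (σ₁ * σ₂) = Uop q m σ₁ * Uop q m σ₂) :=
  stmt6_general q hq2 hq3 m
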